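/- Let (a,b,c) ∈ ℝ³ with a²+b²+c² ≠ 0. On 𝔥(2,1)_{a,b,c}, the curvature 2-forms of the torsion connection ∇⁺ satisfy the SU(2)-instanton conditions (Ωⁱⱼ(ψX,ψY) = Ωⁱⱼ(X,Y) for all X,Y, and Σ_{k=1}^{5} Ωⁱⱼ(E_k,ψE_k) = 0, for all i,j), and the first Pontrjagin form of ∇⁺ is p₁(∇⁺) = −((a²+b²+c²)²/(2π²)) e¹∧e²∧e³∧e⁴. -/

import Mathlib

noncomputable section
open Real

/-- ℝ⁵, the underlying space of the Lie algebra 𝔥(2,1)_{a,b,c}. -/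
abbrev V : Type := Fin 5 → ℝ

/-- The standard (orthonormal) basis vectors E₁,…,E₅ (0-indexed). -/
def E (i : Fin 5) : V := Pi.single i 1

/-- The inner product making E₁,…,E₅ orthonormal. -/
def ip (x y : V) : ℝ := ∑ i, x i * y i

/-- The dual basis 1-forms e¹,…,e⁵ (0-indexed). -/
def e (i : Fin 5) : V → ℝ := fun x => x i

/-- The Lie bracket of 𝔥(2,1)_{a,b,c}: the only nonzero brackets of basis vectors are
[E₁,E₂] = −aE₅, [E₃,E₄] = aE₅, [E₁,E₃] = −bE₅, [E₂,E₄] = −bE₅, [E₁,E₄] = −cE₅,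
[E₂,E₃] = cE₅. -/
def br (a b c : ℝ) (x y : V) : V := fun k =>
  if k = 4 then
    -a * (x 0 * y 1 - x 1 * y 0) + a * (x 2 * y 3 - x 3 * y 2)
      - b * (x 0 * y 2 - x 2 * y 0) - b * (x 1 * y 3 - x 3 * y 1)
      - c * (x 0 * y 3 - x 3 * y 0) + c * (x 1 * y 2 - x 2 * y 1)
  else 0

/-- Chevalley–Eilenberg differential of a 1-form: dα(X,Y) = −α([X,Y]). -/
def d1 (a b c : ℝ) (α : V → ℝ) : V → V → ℝ := fun x y => -α (br a b c x y)

/-- dη = de⁵, the Chevalley–Eilenberg differential of η = e⁵. -/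
def dEta (a b c : ℝ) : V → V → ℝ := d1 a b c (e 4)

/-- Wedge product of two 1-forms. -/
def w11 (α β : V → ℝ) : V → V → ℝ := fun x y => α x * β y - α y * β x

/-- Wedge product of a 1-form and a 2-form. -/
def w12 (α : V → ℝ) (β : V → V → ℝ) : V → V → V → ℝ :=
  fun x y z => α x * β y z - α y * β x z + α z * β x y

/-- Wedge product of two 2-forms. -/
def w22 (α β : V → V → ℝ) : V → V → V → V → ℝ := fun x y z w =>
  α x y * β z w - α x z * β y w + α x w * β y z
    + α y z * β x w - α y w * β x z + α z w * β x y

/-- The 4-form e¹∧e²∧e³∧e⁴. -/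
def e1234 : V → V → V → V → ℝ := w22 (w11 (e 0) (e 1)) (w11 (e 2) (e 3))

/-- The torsion 3-form T = η∧dη. -/
def T3 (a b c : ℝ) : V → V → V → ℝ := w12 (e 4) (dEta a b c)

/-- Chevalley–Eilenberg differential of a 3-form. -/
def d3 (a b c : ℝ) (T : V → V → V → ℝ) : V → V → V → V → ℝ := fun x y z w =>
  -T (br a b c x y) z w + T (br a b c x z) y w - T (br a b c x w) y z
    - T (br a b c y z) x w + T (br a b c y w) x z - T (br a b c z w) x y

/-- The Levi-Civita (Koszul) connection of the left-invariant metric: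
2⟨∇_X Y, Z⟩ = ⟨[X,Y],Z⟩ − ⟨[Y,Z],X⟩ + ⟨[Z,X],Y⟩. -/
def nablaG (a b c : ℝ) (x y : V) : V := fun k =>
  (1 / 2) * (ip (br a b c x y) (E k) - ip (br a b c y (E k)) x + ip (br a b c (E k) x) y)

/-- The torsion connection ∇⁺: ⟨∇⁺_X Y, Z⟩ = ⟨∇_X Y, Z⟩ + ½T(X,Y,Z). -/
def nablaP (a b c : ℝ) (x y : V) : V := fun k =>
  nablaG a b c x y k + (1 / 2) * T3 a b c x y (E k)

/-- Connection 1-forms ωⁱⱼ(X) = ⟨D_X E_j, E_i⟩ of a connection D. -/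
def conn1 (D : V → V → V) (i j : Fin 5) : V → ℝ := fun x => ip (D x (E j)) (E i)

/-- Curvature 2-forms Ωⁱⱼ = dσⁱⱼ + Σ_k σⁱ_k ∧ σᵏⱼ of connection 1-forms σ. -/
def curv (a b c : ℝ) (σ : Fin 5 → Fin 5 → V → ℝ) (i j : Fin 5) : V → V → ℝ :=
  fun x y => d1 a b c (σ i j) x y + ∑ k, (σ i k x * σ k j y - σ i k y * σ k j x)

/-- First Pontrjagin 4-form p₁ = (1/8π²) Σ_{1≤i<j≤5} Ωⁱⱼ∧Ωⁱⱼ. -/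
def pont (Ω : Fin 5 → Fin 5 → V → V → ℝ) : V → V → V → V → ℝ := fun x y z w =>
  (1 / (8 * π ^ 2)) * ∑ i, ∑ j, if i < j then w22 (Ω i j) (Ω i j) x y z w else 0

/-- The endomorphism ψ: ψE₁ = −E₂, ψE₂ = E₁, ψE₃ = −E₄, ψE₄ = E₃, ψE₅ = 0. -/
def psi (x : V) : V := ![x 1, -x 0, x 3, -x 2, 0]

/-- The coefficients of the connection 1-forms σⁱⱼ = (S i j)·e⁵ of the instanton
A_{λ,μ,τ}: σ¹₂ = −σ²₁ = −σ³₄ = σ⁴₃ = −λe⁵, σ¹₃ = −σ³₁ = σ²₄ = −σ⁴₂ = −μe⁵,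
σ¹₄ = −σ⁴₁ = −σ²₃ = σ³₂ = −τe⁵, all other σⁱⱼ = 0. -/
def S (lam mu tau : ℝ) : Fin 5 → Fin 5 → ℝ :=
  ![![0, -lam, -mu, -tau, 0],
    ![lam, 0, tau, -mu, 0],
    ![mu, -tau, 0, lam, 0],
    ![tau, mu, -lam, 0, 0],
    ![0, 0, 0, 0, 0]]

/-- The connection 1-forms of the instanton A_{λ,μ,τ}. -/
def sigmaA (lam mu tau : ℝ) (i j : Fin 5) : V → ℝ := fun x => S lam mu tau i j * e 4 x

/-!
The connection 1-forms of `∇⁺` are `S a b c ⊗ η`: `∇⁺` is the instanton `A_{a,b,c}`. Since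
`η ∧ η = 0`, the quadratic term of the curvature vanishes and `Ωⁱⱼ = S a b c i j • dη`. The
2-form `dη` is `ψ`-invariant and traceless against `ψ`, which gives the instanton conditions, and
`dη ∧ dη = -2(a² + b² + c²) e¹²³⁴`, while `Σ_{i<j} (S a b c i j)² = 2(a² + b² + c²)`.
-/

section
variable (a b c : ℝ)

lemma ip_E (z : V) (i : Fin 5) : ip z (E i) = z i := by
  simp [ip, E, Pi.single_apply]

lemma ip_br (u v w : V) : ip (br a b c u v) w = br a b c u v 4 * w 4 := by
  simp [ip, br]

theorem conn1_nablaP : conn1 (nablaP a b c) = sigmaA a b c := by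
  funext i j x
  simp only [conn1, ip_E, nablaP, nablaG, T3, w12, dEta, d1, e, ip_br, sigmaA]
  fin_cases i <;> fin_cases j <;>
    simp [br, E, S] <;> ring

theorem curv_smul_oneForm (M : Fin 5 → Fin 5 → ℝ) (α : V → ℝ) (i j : Fin 5) (x y : V) :
    curv a b c (fun i j x => M i j * α x) i j x y = M i j * d1 a b c α x y := by
  simp only [curv, d1]
  rw [Finset.sum_eq_zero fun k _ => by ring]
  ring

theorem curv_sigmaA (lam mu tau : ℝ) (i j : Fin 5) (x y : V) :
    curv a b c (sigmaA lam mu tau) i j x y = S lam mu tau i j * dEta a b c x y :=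
  curv_smul_oneForm a b c (S lam mu tau) (e 4) i j x y

theorem dEta_psi (x y : V) : dEta a b c (psi x) (psi y) = dEta a b c x y := by
  simp [dEta, d1, e, br, psi]
  ring

theorem sum_dEta_E_psi_E : ∑ k, dEta a b c (E k) (psi (E k)) = 0 := by
  simp [Fin.sum_univ_five, dEta, d1, e, br, psi, E, Pi.single_apply]

theorem w22_dEta_self (x y z w : V) :
    w22 (dEta a b c) (dEta a b c) x y z w = -2 * (a ^ 2 + b ^ 2 + c ^ 2) * e1234 x y z w := by
  simp only [dEta, d1, br, e1234, w22, w11, e]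
  norm_num
  ring

end

theorem pont_smul_twoForm (M : Fin 5 → Fin 5 → ℝ) (α : V → V → ℝ) (x y z w : V) :
    pont (fun i j x y => M i j * α x y) x y z w
      = (1 / (8 * π ^ 2)) * (∑ i, ∑ j, if i < j then M i j ^ 2 else 0) * w22 α α x y z w := by
  simp only [pont, w22, Finset.sum_mul, ite_mul, zero_mul, mul_assoc]
  congr 1
  refine Finset.sum_congr rfl fun i _ => Finset.sum_congr rfl fun j _ => ?_
  split_ifs <;> ring

theorem sum_sq_S (lam mu tau : ℝ) :
    (∑ i, ∑ j, if i < j then S lam mu tau i j ^ 2 else 0) = 2 * (lam ^ 2 + mu ^ 2 + tau ^ 2) := by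
  simp [Fin.sum_univ_five, S]
  ring

theorem torsion_connection_instanton_general (a b c : ℝ) :
    -- SU(2)-instanton condition: Ωⁱⱼ(ψX,ψY) = Ωⁱⱼ(X,Y)
    (∀ i j : Fin 5, ∀ x y : V,
      curv a b c (conn1 (nablaP a b c)) i j (psi x) (psi y)
        = curv a b c (conn1 (nablaP a b c)) i j x y)
    -- SU(2)-instanton condition: Σ_k Ωⁱⱼ(E_k, ψE_k) = 0
    ∧ (∀ i j : Fin 5,
        (∑ k, curv a b c (conn1 (nablaP a b c)) i j (E k) (psi (E k))) = 0)
    -- p₁(∇⁺) = −((a²+b²+c²)²/(2π²)) e¹∧e²∧e³∧e⁴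
    ∧ (∀ x y z w : V,
        pont (curv a b c (conn1 (nablaP a b c))) x y z w =
          -((a ^ 2 + b ^ 2 + c ^ 2) ^ 2 / (2 * π ^ 2)) * e1234 x y z w) := by
  have hΩ : curv a b c (conn1 (nablaP a b c)) = fun i j x y => S a b c i j * dEta a b c x y := by
    funext i j x y
    rw [conn1_nablaP, curv_sigmaA]
  simp only [hΩ]
  refine ⟨fun i j x y => by rw [dEta_psi], fun i j => ?_, fun x y z w => ?_⟩
  · rw [← Finset.mul_sum, sum_dEta_E_psi_E, mul_zero]
  · rw [pont_smul_twoForm, sum_sq_S, w22_dEta_self]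
    field_simp
    ring

/-- on 𝔥(2,1)_{a,b,c} the curvature 2-forms of the torsion connection ∇⁺
satisfy the SU(2)-instanton conditions, and the first Pontrjagin form of ∇⁺ is
p₁(∇⁺) = −((a²+b²+c²)²/(2π²)) e¹∧e²∧e³∧e⁴. -/
theorem torsion_connection_instanton (a b c : ℝ) (h : a ^ 2 + b ^ 2 + c ^ 2 ≠ 0) :
    -- SU(2)-instanton condition: Ωⁱⱼ(ψX,ψY) = Ωⁱⱼ(X,Y)
    (∀ i j : Fin 5, ∀ x y : V,
      curv a b c (conn1 (nablaP a b c)) i j (psi x) (psi y)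
        = curv a b c (conn1 (nablaP a b c)) i j x y)
    -- SU(2)-instanton condition: Σ_k Ωⁱⱼ(E_k, ψE_k) = 0
    ∧ (∀ i j : Fin 5,
        (∑ k, curv a b c (conn1 (nablaP a b c)) i j (E k) (psi (E k))) = 0)
    -- p₁(∇⁺) = −((a²+b²+c²)²/(2π²)) e¹∧e²∧e³∧e⁴
    ∧ (∀ x y z w : V,
        pont (curv a b c (conn1 (nablaP a b c))) x y z w =
          -((a ^ 2 + b ^ 2 + c ^ 2) ^ 2 / (2 * π ^ 2)) * e1234 x y z w) :=
  torsion_connection_instanton_general a b c
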